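/- arXiv:1807.05993 — 2 statements merged into one kernel-verified Lean document; each statement's English description precedes it below -/
import Mathlib

section
/- Let S : ℝ → ℝ be continuously differentiable with m_S ≤ S'(φ) ≤ M_S for all φ ∈ ℝ, where 0 < m_S ≤ M_S. Define the energy functional W(ψ) = ∫₀^ψ S'(φ)·φ dφ. Then for all ψ, ξ ∈ ℝ one has W(ψ) − W(ξ) ≤ ψ·(S(ψ) − S(ξ)). -/
open MeasureTheory

/- Both sides are integrals over `[ξ, ψ]` against the nonnegative weight `S'`: the difference is
`∫_ξ^ψ S'(φ) (ψ - φ) dφ`, whose integrand has the sign of `ψ - ξ` on the interval, which is exactly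
compensated by the orientation of the integral. -/

theorem intervalIntegral.integral_mul_sub_nonneg {f : ℝ → ℝ} (hf : ∀ x, 0 ≤ f x) (a b : ℝ) :
    0 ≤ ∫ x in a..b, f x * (b - x) := by
  rcases le_total a b with hab | hba
  · exact integral_nonneg hab fun x hx => mul_nonneg (hf x) (sub_nonneg.mpr hx.2)
  · have hflip : ∫ x in a..b, f x * (b - x) = ∫ x in b..a, f x * (x - b) := by
      rw [integral_symm, ← integral_neg]
      congr 1 with x
      ring
    rw [hflip]
    exact integral_nonneg hba fun x hx => mul_nonneg (hf x) (sub_nonneg.mpr hx.1)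

theorem intervalIntegral.integral_mul_id_le_mul_integral {f : ℝ → ℝ} (hf : Continuous f)
    (hf0 : ∀ x, 0 ≤ f x) (a b : ℝ) :
    ∫ x in a..b, f x * x ≤ b * ∫ x in a..b, f x := by
  have hsplit : ∫ x in a..b, f x * (b - x) = (b * ∫ x in a..b, f x) - ∫ x in a..b, f x * x := by
    simp only [mul_sub]
    rw [integral_sub ((by fun_prop : Continuous fun x => f x * b).intervalIntegrable _ _)
      ((by fun_prop : Continuous fun x => f x * x).intervalIntegrable _ _), integral_mul_const,
      mul_comm]
  linarith [integral_mul_sub_nonneg hf0 a b]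

theorem energy_functional_convexity_estimate_general
    (S : ℝ → ℝ) (m_S M_S : ℝ)
    (hm : 0 < m_S)
    (hS : ContDiff ℝ 1 S)
    (hS' : ∀ φ : ℝ, m_S ≤ deriv S φ ∧ deriv S φ ≤ M_S)
    (W : ℝ → ℝ)
    (hW : ∀ ψ : ℝ, W ψ = ∫ φ in (0:ℝ)..ψ, deriv S φ * φ) :
    ∀ ψ ξ : ℝ, W ψ - W ξ ≤ ψ * (S ψ - S ξ) := by
  intro ψ ξ
  have hS'_cont : Continuous (deriv S) := hS.continuous_deriv le_rfl
  have hW_sub : W ψ - W ξ = ∫ φ in ξ..ψ, deriv S φ * φ := by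
    rw [hW, hW]
    exact intervalIntegral.integral_interval_sub_left
      ((hS'_cont.mul continuous_id).intervalIntegrable _ _)
      ((hS'_cont.mul continuous_id).intervalIntegrable _ _)
  have hS_sub : S ψ - S ξ = ∫ φ in ξ..ψ, deriv S φ :=
    (intervalIntegral.integral_deriv_eq_sub (fun x _ => hS.differentiable one_ne_zero x)
      (hS'_cont.intervalIntegrable _ _)).symm
  rw [hW_sub, hS_sub]
  exact intervalIntegral.integral_mul_id_le_mul_integral hS'_cont
    (fun φ => hm.le.trans (hS' φ).1) ξ ψ

/-- Lemma 4.4 (second inequality): for the energy functional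
`W ψ = ∫₀^ψ S'(φ)·φ dφ` one has `W ψ − W ξ ≤ ψ·(S ψ − S ξ)`. -/
theorem energy_functional_convexity_estimate
    (S : ℝ → ℝ) (m_S M_S : ℝ)
    (hm : 0 < m_S) (hmM : m_S ≤ M_S)
    (hS : ContDiff ℝ 1 S)
    (hS' : ∀ φ : ℝ, m_S ≤ deriv S φ ∧ deriv S φ ≤ M_S)
    (W : ℝ → ℝ)
    (hW : ∀ ψ : ℝ, W ψ = ∫ φ in (0:ℝ)..ψ, deriv S φ * φ) :
    ∀ ψ ξ : ℝ, W ψ - W ξ ≤ ψ * (S ψ - S ξ) :=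
  energy_functional_convexity_estimate_general S m_S M_S hm hS hS' W hW
end

section
/- Let L > 0, let Ω = (−1/2, 1/2) × (0, L), and let f : ℝ² → ℝ be continuously differentiable on a neighbourhood of the closure of Ω. Define f̄ : [0, L] → ℝ by f̄(y) = ∫_{−1/2}^{1/2} f(ξ, y) dξ. Then for each ξ₀ ∈ [−1/2, 1/2], ∫₀^L (f(ξ₀, y) − f̄(y))² dy ≤ ∫₀^L ∫_{−1/2}^{1/2} (∂_ξ f(ξ, y))² dξ dy. -/
/-!
On each line `y = const`, `f (ξ₀, y) - f̄ y` is the average over `ξ` of `f (ξ₀, y) - f (ξ, y)`, and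
by the fundamental theorem of calculus each of these differences is bounded by `∫ |∂_ξ f| dξ` over
the whole unit interval. Jensen's inequality for the square (Cauchy–Schwarz) bounds
`(∫ |∂_ξ f| dξ)²` by `∫ (∂_ξ f)² dξ`, and integrating this line estimate in `y` gives the claim.
-/

open MeasureTheory Set

theorem sq_integral_le_measureReal_univ_mul_integral_sq {α : Type*} [MeasurableSpace α]
    {μ : Measure α} [IsFiniteMeasure μ] {f : α → ℝ} (hf : Integrable f μ)
    (hf2 : Integrable (fun x => f x ^ 2) μ) :
    (∫ x, f x ∂μ) ^ 2 ≤ μ.real univ * ∫ x, f x ^ 2 ∂μ := by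
  rcases eq_zero_or_neZero μ with rfl | hμ
  · simp
  have jensen := (Even.convexOn_pow even_two).map_average_le (continuous_pow 2).continuousOn
    isClosed_univ (ae_of_all _ fun x => mem_univ (f x)) hf hf2
  rw [average_eq, average_eq, smul_eq_mul, smul_eq_mul, mul_pow] at jensen
  field_simp at jensen
  exact jensen

namespace intervalIntegral

variable {a b x y : ℝ} {f g g' : ℝ → ℝ}

theorem sq_integral_le_mul_integral_sq (hab : a ≤ b) (hf : IntervalIntegrable f volume a b)
    (hf2 : IntervalIntegrable (fun x => f x ^ 2) volume a b) :
    (∫ x in a..b, f x) ^ 2 ≤ (b - a) * ∫ x in a..b, f x ^ 2 := by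
  have := sq_integral_le_measureReal_univ_mul_integral_sq hf.1 hf2.1
  rwa [measureReal_restrict_apply_univ, Real.volume_real_Ioc_of_le hab,
    ← integral_of_le hab, ← integral_of_le hab] at this

-- A non-integrable `f` has integral `0`, so only `g` needs to be integrable.
theorem integral_mono_on_of_nonneg (hab : a ≤ b) (hf : ∀ x ∈ Icc a b, 0 ≤ f x)
    (hg : IntervalIntegrable g volume a b) (hfg : ∀ x ∈ Icc a b, f x ≤ g x) :
    ∫ x in a..b, f x ≤ ∫ x in a..b, g x := by
  rw [integral_of_le hab, integral_of_le hab]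
  refine integral_mono_of_nonneg ?_ hg.1 ?_
  · exact ae_restrict_of_forall_mem measurableSet_Ioc fun x hx => hf x (Ioc_subset_Icc_self hx)
  · exact ae_restrict_of_forall_mem measurableSet_Ioc fun x hx => hfg x (Ioc_subset_Icc_self hx)

theorem abs_sub_le_integral_abs_deriv (hg : ∀ t ∈ Icc a b, HasDerivAt g (g' t) t)
    (hg' : IntervalIntegrable g' volume a b) (hx : x ∈ Icc a b) (hy : y ∈ Icc a b) :
    |g x - g y| ≤ ∫ t in a..b, |g' t| := by
  have hsub : uIcc y x ⊆ Icc a b := uIcc_subset_Icc hy hx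
  have hab : a ≤ b := hx.1.trans hx.2
  rw [← integral_eq_sub_of_hasDerivAt (fun t ht => hg t (hsub ht))
    (hg'.mono_set (by rwa [uIcc_of_le hab]))]
  calc |∫ t in y..x, g' t| ≤ |(∫ t in y..x, |g' t|)| := by
        simpa only [Real.norm_eq_abs] using norm_integral_le_abs_integral_norm (f := g')
    _ ≤ |(∫ t in a..b, |g' t|)| := abs_integral_mono_interval
        (uIoc_subset_uIoc_of_uIcc_subset_uIcc (by rwa [uIcc_of_le hab]))
        (ae_of_all _ fun t => abs_nonneg _) hg'.abs
    _ = ∫ t in a..b, |g' t| := abs_of_nonneg (integral_nonneg hab fun t _ => abs_nonneg _)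

theorem abs_sub_average_le_integral_abs_deriv (hab : a < b)
    (hg : ∀ t ∈ Icc a b, HasDerivAt g (g' t) t) (hg' : IntervalIntegrable g' volume a b)
    (hx : x ∈ Icc a b) :
    |g x - (b - a)⁻¹ * ∫ t in a..b, g t| ≤ ∫ t in a..b, |g' t| := by
  have hba : 0 < b - a := sub_pos.2 hab
  have hgi : IntervalIntegrable g volume a b := ContinuousOn.intervalIntegrable fun t ht =>
    (hg t (by rwa [uIcc_of_le hab.le] at ht)).continuousAt.continuousWithinAt
  have hmean : g x - (b - a)⁻¹ * ∫ t in a..b, g t = (b - a)⁻¹ * ∫ t in a..b, (g x - g t) := by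
    rw [integral_sub intervalIntegrable_const hgi, integral_const, smul_eq_mul]
    field_simp
  rw [hmean, abs_mul, abs_inv, abs_of_pos hba, inv_mul_le_iff₀ hba, mul_comm, ← abs_of_pos hba]
  refine norm_integral_le_of_norm_le_const (f := fun t => g x - g t) fun t ht => ?_
  rw [uIoc_of_le hab.le] at ht
  exact abs_sub_le_integral_abs_deriv hg hg' hx (Ioc_subset_Icc_self ht)

theorem sq_sub_average_le_mul_integral_sq_deriv (hab : a < b)
    (hg : ∀ t ∈ Icc a b, HasDerivAt g (g' t) t) (hg' : IntervalIntegrable g' volume a b)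
    (hg'2 : IntervalIntegrable (fun t => g' t ^ 2) volume a b) (hx : x ∈ Icc a b) :
    (g x - (b - a)⁻¹ * ∫ t in a..b, g t) ^ 2 ≤ (b - a) * ∫ t in a..b, g' t ^ 2 :=
  calc (g x - (b - a)⁻¹ * ∫ t in a..b, g t) ^ 2
      = |g x - (b - a)⁻¹ * ∫ t in a..b, g t| ^ 2 := (sq_abs _).symm
    _ ≤ (∫ t in a..b, |g' t|) ^ 2 :=
        pow_le_pow_left₀ (abs_nonneg _) (abs_sub_average_le_integral_abs_deriv hab hg hg' hx) 2
    _ ≤ (b - a) * ∫ t in a..b, |g' t| ^ 2 :=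
        sq_integral_le_mul_integral_sq hab.le hg'.abs (by simpa only [sq_abs] using hg'2)
    _ = (b - a) * ∫ t in a..b, g' t ^ 2 := by simp only [sq_abs]

end intervalIntegral

theorem ContinuousOn.continuousOn_intervalIntegral_prod {X E : Type*} [TopologicalSpace X]
    [NormedAddCommGroup E] [NormedSpace ℝ E] {a b : ℝ} {s : Set X} {F : ℝ × X → E} (hab : a ≤ b)
    (hF : ContinuousOn F (Icc a b ×ˢ s)) :
    ContinuousOn (fun y => ∫ x in a..b, F (x, y)) s := by
  rw [continuousOn_iff_continuous_domRestrict]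
  have hclamp : Continuous fun p : s × ℝ => F (projIcc a b hab p.2, p.1) :=
    hF.comp_continuous (by fun_prop) fun p => ⟨Subtype.mem _, p.1.2⟩
  convert intervalIntegral.continuous_parametric_intervalIntegral_of_continuous' (μ := volume)
    (f := fun (y : s) x => F (projIcc a b hab x, y)) hclamp a b using 1 with y
  funext y
  refine intervalIntegral.integral_congr fun x hx => ?_
  rw [uIcc_of_le hab] at hx
  simp [projIcc_of_mem hab hx]

theorem HasFDerivAt.hasDerivAt_fst_slice {F E : Type*} [NormedAddCommGroup F] [NormedSpace ℝ F]
    [NormedAddCommGroup E] [NormedSpace ℝ E] {f : ℝ × F → E} {f' : ℝ × F →L[ℝ] E} {p : ℝ × F}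
    (hf : HasFDerivAt f f' p) : HasDerivAt (fun t => f (t, p.2)) (f' (1, 0)) p.1 :=
  hf.comp_hasDerivAt p.1 ((hasDerivAt_id p.1).prodMk (hasDerivAt_const p.1 p.2))

theorem ContDiffOn.continuousOn_deriv_fst_slice {F E : Type*} [NormedAddCommGroup F]
    [NormedSpace ℝ F] [NormedAddCommGroup E] [NormedSpace ℝ E] {f : ℝ × F → E}
    {U : Set (ℝ × F)} (hU : IsOpen U) (hf : ContDiffOn ℝ 1 f U) :
    ContinuousOn (fun p => deriv (fun t => f (t, p.2)) p.1) U := by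
  have hfderiv := (hf.continuousOn_fderiv_of_isOpen hU le_rfl).clm_apply
    (continuousOn_const (c := ((1 : ℝ), (0 : F))))
  refine hfderiv.congr fun p hp => ?_
  exact ((hf.differentiableOn one_ne_zero).differentiableAt (hU.mem_nhds hp)).hasFDerivAt
    |>.hasDerivAt_fst_slice.deriv

/-- Proposition 5.3 (averaging estimate): for `Ω = (−1/2, 1/2) × (0, L)` and a
function `f` that is C¹ on a neighbourhood of the closure of `Ω`, with
transversal average `f̄(y) = ∫_{−1/2}^{1/2} f(ξ, y) dξ`, one has for each
`ξ₀ ∈ [−1/2, 1/2]`: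
`∫₀^L (f(ξ₀,y) − f̄(y))² dy ≤ ∫₀^L ∫_{−1/2}^{1/2} (∂_ξ f(ξ,y))² dξ dy`. -/
theorem averaging_trace_estimate
    (L : ℝ) (hL : 0 < L)
    (f : ℝ × ℝ → ℝ)
    (U : Set (ℝ × ℝ)) (hU : IsOpen U)
    (hclos : closure (Set.Ioo (-(1:ℝ)/2) (1/2) ×ˢ Set.Ioo (0:ℝ) L) ⊆ U)
    (hf : ContDiffOn ℝ 1 f U) :
    ∀ ξ₀ ∈ Set.Icc (-(1:ℝ)/2) (1/2),
      (∫ y in (0:ℝ)..L,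
          (f (ξ₀, y) - ∫ ξ in (-(1:ℝ)/2)..(1/2), f (ξ, y)) ^ 2) ≤
        ∫ y in (0:ℝ)..L,
          ∫ ξ in (-(1:ℝ)/2)..(1/2), (deriv (fun t => f (t, y)) ξ) ^ 2 := by
  intro ξ₀ hξ₀
  set df : ℝ × ℝ → ℝ := fun p => deriv (fun t => f (t, p.2)) p.1
  have hK : Icc (-(1:ℝ)/2) (1/2) ×ˢ Icc 0 L ⊆ U := by
    rwa [closure_prod_eq, closure_Ioo (by norm_num), closure_Ioo hL.ne] at hclos
  have hdf : ∀ x y, (x, y) ∈ U → HasDerivAt (fun t => f (t, y)) (df (x, y)) x := fun x y hp =>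
    ((hf.differentiableOn one_ne_zero).differentiableAt (hU.mem_nhds hp)).hasFDerivAt
      |>.hasDerivAt_fst_slice.differentiableAt.hasDerivAt
  have hdf_cont : ContinuousOn df U := hf.continuousOn_deriv_fst_slice hU
  have hlength : (1:ℝ)/2 - -(1:ℝ)/2 = 1 := by norm_num
  have hslice : ∀ y ∈ Icc 0 L, (f (ξ₀, y) - ∫ ξ in (-(1:ℝ)/2)..(1/2), f (ξ, y)) ^ 2 ≤
      ∫ ξ in (-(1:ℝ)/2)..(1/2), df (ξ, y) ^ 2 := by
    intro y hy
    have hline : ContinuousOn (fun t => df (t, y)) (Icc (-(1:ℝ)/2) (1/2)) :=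
      hdf_cont.comp (by fun_prop) fun t ht => hK ⟨ht, hy⟩
    have := intervalIntegral.sq_sub_average_le_mul_integral_sq_deriv (by norm_num)
      (fun t ht => hdf t y (hK ⟨ht, hy⟩)) (hline.intervalIntegrable_of_Icc (by norm_num))
      ((hline.pow 2).intervalIntegrable_of_Icc (by norm_num)) hξ₀
    rwa [hlength, inv_one, one_mul, one_mul] at this
  refine intervalIntegral.integral_mono_on_of_nonneg hL.le (fun y _ => sq_nonneg _) ?_ hslice
  exact (ContinuousOn.continuousOn_intervalIntegral_prod (by norm_num)
    ((hdf_cont.mono hK).pow 2)).intervalIntegrable_of_Icc hL.le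
end
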